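/- Let p ∈ (0,1], let E be a p-Banach space, let Γ be an index set and, for each γ ∈ Γ, let A γ and B γ be p-Banach spaces, u γ : A γ → B γ a linear isometry, and f γ : A γ → E a nonexpansive linear operator. Then there exist a p-Banach space E' and a linear isometry ι : E → E' such that for every γ ∈ Γ there is a nonexpansive linear operator f'_γ : B γ → E' with f'_γ (u γ a) = ι (f γ a) for all a ∈ A γ; moreover, for any ε ∈ [0,1), if f γ is an ε-isometry then f'_γ is an ε-isometry. -/

import Mathlib

/- Common framework: p-normed and p-Banach spaces, following the paper's definitions. -/

namespace PGurarii

/-- A `p`-norm on a real vector space: `N x = 0 ↔ x = 0`, absolute homogeneity, and the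
`p`-triangle inequality `N (x + y) ^ p ≤ N x ^ p + N y ^ p` (values in `ℝ₊`). -/
structure PNorm (p : ℝ) (X : Type) [AddCommGroup X] [Module ℝ X] where
  N : X → ℝ
  nonneg : ∀ x : X, 0 ≤ N x
  eq_zero_iff : ∀ x : X, N x = 0 ↔ x = 0
  smul_eq : ∀ (a : ℝ) (x : X), N (a • x) = |a| * N x
  add_pow_le : ∀ x y : X, N (x + y) ^ p ≤ N x ^ p + N y ^ p

/-- Completeness (sequential) for the induced metric `d(x,y) = N (x - y) ^ p`. -/
def IsCompleteP (p : ℝ) {X : Type} [AddCommGroup X] [Module ℝ X] (NX : PNorm p X) : Prop :=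
  ∀ u : ℕ → X,
    (∀ ε : ℝ, 0 < ε → ∃ n₀ : ℕ, ∀ m ≥ n₀, ∀ n ≥ n₀, NX.N (u m - u n) ^ p < ε) →
    ∃ x : X, ∀ ε : ℝ, 0 < ε → ∃ n₀ : ℕ, ∀ n ≥ n₀, NX.N (u n - x) ^ p < ε

/-- Separability for the induced metric topology. -/
def IsSeparableP (p : ℝ) {X : Type} [AddCommGroup X] [Module ℝ X] (NX : PNorm p X) : Prop :=
  ∃ D : Set X, D.Countable ∧ ∀ x : X, ∀ ε : ℝ, 0 < ε → ∃ y ∈ D, NX.N (x - y) ^ p < ε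

/-- A subspace is closed for the induced metric topology. -/
def IsClosedSubP (p : ℝ) {X : Type} [AddCommGroup X] [Module ℝ X] (NX : PNorm p X)
    (S : Submodule ℝ X) : Prop :=
  ∀ x : X, (∀ ε : ℝ, 0 < ε → ∃ y ∈ S, NX.N (x - y) ^ p < ε) → x ∈ S

/-- The restriction of a `p`-norm to a subspace. -/
def PNorm.restrict {p : ℝ} {X : Type} [AddCommGroup X] [Module ℝ X]
    (NX : PNorm p X) (S : Submodule ℝ X) : PNorm p S where
  N x := NX.N x
  nonneg x := NX.nonneg x
  eq_zero_iff x := by rw [NX.eq_zero_iff]; exact ZeroMemClass.coe_eq_zero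
  smul_eq a x := NX.smul_eq a x
  add_pow_le x y := NX.add_pow_le x y

/-- A `p`-Banach space: a real vector space with a `p`-norm, complete for the induced metric. -/
structure PBanach (p : ℝ) where
  carrier : Type
  [addCommGroup : AddCommGroup carrier]
  [module : Module ℝ carrier]
  pnorm : PNorm p carrier
  complete : IsCompleteP p pnorm

attribute [instance] PBanach.addCommGroup PBanach.module

/-- `U` is of almost universal disposition for finite-dimensional `p`-Banach spaces: for every
`ε > 0`, every isometry from a subspace `X` of `U` (with the restricted `p`-norm) into a
finite-dimensional `p`-Banach space `Y` extends, after an `ε`-isometry `Y → U`, the inclusion. -/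
def AUD (p : ℝ) (U : Type) [AddCommGroup U] [Module ℝ U] (NU : PNorm p U) : Prop :=
  ∀ ε : ℝ, 0 < ε → ∀ Y : PBanach p, FiniteDimensional ℝ Y.carrier →
    ∀ (Xs : Submodule ℝ U) (g : Xs →ₗ[ℝ] Y.carrier),
      (∀ x : Xs, Y.pnorm.N (g x) = NU.N (x : U)) →
      ∃ f : Y.carrier →ₗ[ℝ] U,
        (∀ y, (1 - ε) * Y.pnorm.N y ≤ NU.N (f y) ∧ NU.N (f y) ≤ (1 + ε) * Y.pnorm.N y) ∧
        ∀ x : Xs, f (g x) = (x : U)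

/-- `U` is of universal disposition for separable `p`-Banach spaces. -/
def UD (p : ℝ) (U : Type) [AddCommGroup U] [Module ℝ U] (NU : PNorm p U) : Prop :=
  ∀ Y : PBanach p, IsSeparableP p Y.pnorm →
    ∀ (Xs : Submodule ℝ U), IsClosedSubP p NU Xs →
      ∀ g : Xs →ₗ[ℝ] Y.carrier, (∀ x : Xs, Y.pnorm.N (g x) = NU.N (x : U)) →
        ∃ f : Y.carrier →ₗ[ℝ] U, (∀ y, NU.N (f y) = Y.pnorm.N y) ∧ ∀ x : Xs, f (g x) = (x : U)

end PGurarii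

/-!
`E'` is a pushout: the quotient of the `ℓ_p`-sum `E ⊕ₚ ℓₚ(B γ)` by the closure of the span of the
vectors `(f γ a, -u γ a)`, with `ι` and `f' γ` induced by the coordinate inclusions, so that
`f' γ ∘ u γ = ι ∘ f γ` holds by construction. Measured by `N ^ p`, a `p`-normed space is a normed
additive group; the `ℓ_p`-sum is then an `ℓ_1`-sum, and completeness of the sum and of its
quotient is standard. The coordinate inclusions are nonexpansive, so the work is in the lower
bounds for the quotient norm, i.e. for the norms of `v + ∑ γ (f γ (a γ), -u γ (a γ))` with
`v = (x, 0)` or `v = (0, b)`: in the first coordinate the `p`-triangle inequality loses at most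
`N (f γ (a γ)) ^ p ≤ N (a γ) ^ p`, which the coordinate `γ` pays back with
`N (u γ (a γ)) ^ p = N (a γ) ^ p`.
-/

namespace PGurarii

noncomputable section

open Filter Topology

namespace PNorm

variable {p : ℝ} {X : Type} [AddCommGroup X] [Module ℝ X]

lemma map_zero (N : PNorm p X) : N.N 0 = 0 := (N.eq_zero_iff 0).mpr rfl

lemma map_neg (N : PNorm p X) (x : X) : N.N (-x) = N.N x := by
  simpa using N.smul_eq (-1) x

lemma pow_le_add_pow_sub (N : PNorm p X) (x y : X) :
    N.N x ^ p ≤ N.N y ^ p + N.N (x - y) ^ p := by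
  simpa using N.add_pow_le y (x - y)

variable [Fact (0 < p)]

def toAddGroupNorm (N : PNorm p X) : AddGroupNorm X where
  toFun x := N.N x ^ p
  map_zero' := by simp [N.map_zero, Real.zero_rpow (Fact.out : 0 < p).ne']
  add_le' := N.add_pow_le
  neg' x := by simp only [N.map_neg]
  eq_zero_of_map_eq_zero' x h :=
    (N.eq_zero_iff x).mp ((Real.rpow_eq_zero (N.nonneg x) (Fact.out : 0 < p).ne').mp h)

/-- `X` normed by `‖x‖ = N x ^ p`. -/
def Normed (_ : PNorm p X) : Type := X

instance (N : PNorm p X) : NormedAddCommGroup N.Normed := N.toAddGroupNorm.toNormedAddCommGroup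

instance (N : PNorm p X) : Module ℝ N.Normed := inferInstanceAs (Module ℝ X)

def toNormed (N : PNorm p X) : X ≃ₗ[ℝ] N.Normed := LinearEquiv.refl ℝ X

lemma norm_toNormed (N : PNorm p X) (x : X) : ‖N.toNormed x‖ = N.N x ^ p := rfl

lemma norm_smul_normed (N : PNorm p X) (a : ℝ) (x : N.Normed) : ‖a • x‖ = |a| ^ p * ‖x‖ :=
  (congrArg (· ^ p) (N.smul_eq a x)).trans (Real.mul_rpow (abs_nonneg a) (N.nonneg x))

variable {Y : Type} [NormedAddCommGroup Y] [Module ℝ Y]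

def ofNorm (h : ∀ (a : ℝ) (y : Y), ‖a • y‖ = |a| ^ p * ‖y‖) : PNorm p Y where
  N y := ‖y‖ ^ p⁻¹
  nonneg y := by positivity
  eq_zero_iff y := by
    rw [Real.rpow_eq_zero (norm_nonneg y) (inv_ne_zero (Fact.out : 0 < p).ne'), norm_eq_zero]
  smul_eq a y := by
    rw [h, Real.mul_rpow (by positivity) (norm_nonneg y), ← Real.rpow_mul (abs_nonneg a),
      mul_inv_cancel₀ (Fact.out : 0 < p).ne', Real.rpow_one]
  add_pow_le x y := by
    simp only [Real.rpow_inv_rpow (norm_nonneg _) (Fact.out : 0 < p).ne']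
    exact norm_add_le x y

lemma ofNorm_pow (h : ∀ (a : ℝ) (y : Y), ‖a • y‖ = |a| ^ p * ‖y‖) (y : Y) :
    (ofNorm h).N y ^ p = ‖y‖ :=
  Real.rpow_inv_rpow (norm_nonneg y) (Fact.out : 0 < p).ne'

end PNorm

lemma isCompleteP_iff_completeSpace {p : ℝ} {X Y : Type} [AddCommGroup X] [Module ℝ X]
    [SeminormedAddCommGroup Y] (N : PNorm p X) (e : X ≃+ Y) (he : ∀ x, ‖e x‖ = N.N x ^ p) :
    IsCompleteP p N ↔ CompleteSpace Y := by
  have hdist : ∀ x x', dist (e x) (e x') = N.N (x - x') ^ p := by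
    intro x x'
    rw [dist_eq_norm, ← map_sub, he]
  have hcauchy : ∀ u : ℕ → X, CauchySeq (e ∘ u) ↔
      ∀ ε > 0, ∃ n₀, ∀ m ≥ n₀, ∀ n ≥ n₀, N.N (u m - u n) ^ p < ε := by
    intro u
    simp only [Metric.cauchySeq_iff, Function.comp_apply, hdist]
  have hlim : ∀ (u : ℕ → X) x, Tendsto (e ∘ u) atTop (𝓝 (e x)) ↔
      ∀ ε > 0, ∃ n₀, ∀ n ≥ n₀, N.N (u n - x) ^ p < ε := by
    intro u x
    simp only [Metric.tendsto_atTop, Function.comp_apply, hdist]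
  constructor
  · refine fun h => Metric.complete_of_cauchySeq_tendsto fun v hv => ?_
    have hu : CauchySeq (e ∘ e.symm ∘ v) := by simpa [Function.comp_def] using hv
    obtain ⟨x, hx⟩ := h _ ((hcauchy _).mp hu)
    exact ⟨e x, by simpa [Function.comp_def] using (hlim _ x).mpr hx⟩
  · intro _ u hu
    obtain ⟨y, hy⟩ := cauchySeq_tendsto_of_complete ((hcauchy u).mpr hu)
    exact ⟨e.symm y, (hlim u _).mp (by simpa using hy)⟩

variable {p : ℝ} [Fact (0 < p)]

instance (E : PBanach p) : CompleteSpace E.pnorm.Normed :=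
  (isCompleteP_iff_completeSpace E.pnorm E.pnorm.toNormed.toAddEquiv
    E.pnorm.norm_toNormed).mp E.complete

section LpSum

variable {ι : Type} {X : ι → Type} [∀ i, AddCommGroup (X i)]
  [∀ i, Module ℝ (X i)] (N : ∀ i, PNorm p (X i))

/-- The `ℓ_p`-sum of the `X i`, as the `ℓ_1`-sum of the `(N i).Normed`. -/
abbrev LpSum : Type := lp (fun i => (N i).Normed) 1

namespace LpSum

variable {N}

lemma hasSum_norm (x : LpSum N) : HasSum (fun i => ‖x i‖) ‖x‖ := by
  simpa using lp.hasSum_norm (p := 1) (by simp) x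

lemma memℓp_smul (a : ℝ) {x : ∀ i, (N i).Normed} (hx : Memℓp x 1) : Memℓp (a • x) 1 := by
  rw [memℓp_gen_iff (by simp)] at hx ⊢
  simp only [ENNReal.toReal_one, Real.rpow_one, Pi.smul_apply, PNorm.norm_smul_normed] at hx ⊢
  exact hx.mul_left _

variable (N) in
def submodule : Submodule ℝ (PreLp fun i => (N i).Normed) :=
  { lp (fun i => (N i).Normed) 1 with smul_mem' := fun a _ hx => memℓp_smul a hx }

instance : Module ℝ (LpSum N) := inferInstanceAs (Module ℝ (submodule N))

@[simp] lemma add_apply (x y : LpSum N) (i : ι) : (x + y) i = x i + y i := rfl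

@[simp] lemma sub_apply (x y : LpSum N) (i : ι) : (x - y) i = x i - y i := rfl

@[simp] lemma coe_smul (a : ℝ) (x : LpSum N) : ⇑(a • x) = a • ⇑x := rfl

lemma norm_smul (a : ℝ) (x : LpSum N) : ‖a • x‖ = |a| ^ p * ‖x‖ := by
  refine (hasSum_norm (a • x)).unique ?_
  simp only [coe_smul, Pi.smul_apply, PNorm.norm_smul_normed]
  exact (hasSum_norm x).mul_left _

instance : ContinuousConstSMul ℝ (LpSum N) :=
  ⟨fun a => AddMonoidHomClass.continuous_of_bound (DistribSMul.toAddMonoidHom _ a) (|a| ^ p)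
    fun x => (norm_smul a x).le⟩

variable [DecidableEq ι]

variable (N) in
def single (i : ι) : X i →ₗ[ℝ] LpSum N where
  toFun x := lp.single 1 i ((N i).toNormed x)
  map_add' x y := by rw [map_add, lp.single_add]
  map_smul' a x := lp.ext (Pi.single_smul i a ((N i).toNormed x))

lemma single_apply_self (i : ι) (x : X i) : single N i x i = (N i).toNormed x :=
  lp.single_apply_self 1 i _

lemma single_apply_ne {i j : ι} (h : j ≠ i) (x : X i) : single N i x j = 0 :=
  lp.single_apply_ne 1 i _ h

lemma norm_single (i : ι) (x : X i) : ‖single N i x‖ = (N i).N x ^ p :=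
  lp.norm_single (by simp) i _

lemma norm_add_single {i : ι} {y : LpSum N} (hy : y i = 0) (x : X i) :
    ‖y + single N i x‖ = ‖y‖ + (N i).N x ^ p := by
  have hsum := (hasSum_norm y).update i ((N i).N x ^ p)
  rw [hy, norm_zero, sub_zero, add_comm] at hsum
  refine (hasSum_norm _).unique (hsum.congr_fun fun j => ?_)
  rcases eq_or_ne j i with rfl | hj
  · rw [Function.update_self, add_apply, hy, single_apply_self, zero_add,
      PNorm.norm_toNormed]
  · simp [hj, single_apply_ne hj]

end LpSum

end LpSum

section Quotient

variable {M : Type} [SeminormedAddCommGroup M] [Module ℝ M]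

lemma norm_smul_quotient (hM : ∀ (a : ℝ) (x : M), ‖a • x‖ = |a| ^ p * ‖x‖)
    (S : Submodule ℝ M) (a : ℝ) (ξ : M ⧸ S) : ‖a • ξ‖ = |a| ^ p * ‖ξ‖ := by
  have hp : p ≠ 0 := (Fact.out : 0 < p).ne'
  have key : ∀ (a : ℝ) (ξ : M ⧸ S), a ≠ 0 → ‖a • ξ‖ ≤ |a| ^ p * ‖ξ‖ := by
    intro a ξ ha
    have hc : 0 < |a| ^ p := Real.rpow_pos_of_pos (abs_pos.mpr ha) p
    rw [← div_le_iff₀' hc]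
    refine QuotientAddGroup.le_norm_iff.mpr fun m hm => ?_
    rw [div_le_iff₀' hc, ← hM, ← hm]
    exact Submodule.Quotient.norm_mk_le S (a • m)
  rcases eq_or_ne a 0 with rfl | ha
  · simp [Real.zero_rpow hp]
  refine le_antisymm (key a ξ ha) ?_
  have := key a⁻¹ (a • ξ) (inv_ne_zero ha)
  rwa [inv_smul_smul₀ ha, abs_inv, Real.inv_rpow (abs_nonneg a), ← div_eq_inv_mul,
    le_div_iff₀' (Real.rpow_pos_of_pos (abs_pos.mpr ha) p)] at this

variable [ContinuousConstSMul ℝ M]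

lemma le_norm_mk_topologicalClosure {S : Submodule ℝ M} {x : M} {c : ℝ}
    (h : ∀ s ∈ S, c ≤ ‖x + s‖) :
    c ≤ ‖(Submodule.Quotient.mk x : M ⧸ S.topologicalClosure)‖ := by
  refine QuotientAddGroup.le_norm_iff.mpr fun m hm => ?_
  have hmem : m - x ∈ closure (S : Set M) :=
    (Submodule.Quotient.eq S.topologicalClosure).mp hm
  have hclosed : IsClosed {s : M | c ≤ ‖x + s‖} :=
    isClosed_le continuous_const (continuous_const.add continuous_id).norm
  have hm' : c ≤ ‖x + (m - x)‖ := closure_minimal h hclosed hmem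
  rwa [add_sub_cancel] at hm'

end Quotient

section Pushout

variable {Γ : Type} [DecidableEq Γ] (P : Option Γ → PBanach p)

/-- `P none` plays the role of `E` and `P (some γ)` that of `B γ`. -/
abbrev PushoutSum : Type := LpSum fun o => (P o).pnorm

variable {P} {A : Γ → PBanach p} (u : ∀ γ, (A γ).carrier →ₗ[ℝ] (P (some γ)).carrier)
  (f : ∀ γ, (A γ).carrier →ₗ[ℝ] (P none).carrier)

def pushoutRel : (Π₀ γ, (A γ).carrier) →ₗ[ℝ] PushoutSum P :=
  DFinsupp.lsum ℕ fun γ => LpSum.single _ none ∘ₗ f γ - LpSum.single _ (some γ) ∘ₗ u γ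

lemma pushoutRel_single (γ : Γ) (a : (A γ).carrier) :
    pushoutRel u f (DFinsupp.single γ a) =
      LpSum.single _ none (f γ a) - LpSum.single _ (some γ) (u γ a) := by
  rw [pushoutRel, DFinsupp.lsum_single]; rfl

lemma pushoutRel_apply_some (a : Π₀ γ, (A γ).carrier) (γ : Γ) :
    pushoutRel u f a (some γ) = -(P (some γ)).pnorm.toNormed (u γ (a γ)) := by
  induction a using DFinsupp.induction with
  | h0 => simp
  | ha γ' c a _ _ ih =>
    rw [map_add, pushoutRel_single, LpSum.add_apply, LpSum.sub_apply, ih,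
      LpSum.single_apply_ne (Option.some_ne_none γ), zero_sub, DFinsupp.add_apply, map_add,
      map_add, neg_add]
    rcases eq_or_ne γ' γ with rfl | h
    · rw [LpSum.single_apply_self, DFinsupp.single_eq_same]
    · rw [LpSum.single_apply_ne (Option.some_injective _ |>.ne h.symm),
        DFinsupp.single_eq_of_ne h.symm]
      simp

def pushoutKer : Submodule ℝ (PushoutSum P) := (LinearMap.range (pushoutRel u f)).topologicalClosure

instance : IsClosed (pushoutKer u f : Set (PushoutSum P)) := Submodule.isClosed_topologicalClosure _

abbrev Pushout : Type := PushoutSum P ⧸ pushoutKer u f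

def pushoutPBanach : PBanach p where
  carrier := Pushout u f
  pnorm := PNorm.ofNorm (norm_smul_quotient LpSum.norm_smul _)
  complete := (isCompleteP_iff_completeSpace _ (AddEquiv.refl _)
    fun _ => (PNorm.ofNorm_pow _ _).symm).mpr inferInstance

lemma pushoutPBanach_pnorm (ξ : Pushout u f) : (pushoutPBanach u f).pnorm.N ξ = ‖ξ‖ ^ p⁻¹ :=
  rfl

def pushoutInj (o : Option Γ) : (P o).carrier →ₗ[ℝ] Pushout u f :=
  (pushoutKer u f).mkQ ∘ₗ LpSum.single (fun o => (P o).pnorm) o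

lemma pushoutInj_some_comp (γ : Γ) (a : (A γ).carrier) :
    pushoutInj u f (some γ) (u γ a) = pushoutInj u f none (f γ a) := by
  refine ((Submodule.Quotient.eq _).mpr ?_).symm
  rw [← pushoutRel_single]
  exact Submodule.le_topologicalClosure _ (LinearMap.mem_range_self _ _)

lemma norm_pushoutInj_le (o : Option Γ) (x : (P o).carrier) :
    ‖pushoutInj u f o x‖ ≤ (P o).pnorm.N x ^ p := by
  rw [pushoutInj, LinearMap.comp_apply, Submodule.mkQ_apply,
    ← LpSum.norm_single (N := fun o => (P o).pnorm)]
  exact Submodule.Quotient.norm_mk_le _ _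

lemma pushoutPBanach_pnorm_inj_le (o : Option Γ) (x : (P o).carrier) :
    (pushoutPBanach u f).pnorm.N (pushoutInj u f o x) ≤ (P o).pnorm.N x := by
  rw [pushoutPBanach_pnorm, Real.rpow_inv_le_iff_of_pos (norm_nonneg _) (PNorm.nonneg _ _) Fact.out]
  exact norm_pushoutInj_le u f o x

variable {u f}
variable (hu : ∀ γ a, (P (some γ)).pnorm.N (u γ a) = (A γ).pnorm.N a)
  (hf : ∀ γ a, (P none).pnorm.N (f γ a) ≤ (A γ).pnorm.N a)
include hu hf

lemma le_norm_single_none_add_pushoutRel (x : (P none).carrier) (a : Π₀ γ, (A γ).carrier) :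
    (P none).pnorm.N x ^ p ≤ ‖LpSum.single _ none x + pushoutRel u f a‖ := by
  induction a using DFinsupp.induction generalizing x with
  | h0 => rw [map_zero, add_zero, LpSum.norm_single]
  | ha γ c a ha _ ih =>
    have hsome :
        (LpSum.single _ none (x + f γ c) + pushoutRel u f a : PushoutSum P) (some γ) = 0 := by
      rw [LpSum.add_apply, LpSum.single_apply_ne (Option.some_ne_none γ), pushoutRel_apply_some,
        ha, map_zero, map_zero, neg_zero, zero_add]
    have hsplit : LpSum.single _ none x + pushoutRel u f (DFinsupp.single γ c + a) =
        (LpSum.single _ none (x + f γ c) + pushoutRel u f a) +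
          LpSum.single _ (some γ) (-u γ c) := by
      rw [map_add, pushoutRel_single, map_add, map_neg]
      abel
    have hfc := Real.rpow_le_rpow ((P none).pnorm.nonneg _) (hf γ c) (Fact.out : 0 < p).le
    calc (P none).pnorm.N x ^ p
        ≤ (P none).pnorm.N (x + f γ c) ^ p + (P none).pnorm.N (f γ c) ^ p := by
          simpa [(P none).pnorm.map_neg] using (P none).pnorm.pow_le_add_pow_sub x (x + f γ c)
      _ ≤ ‖LpSum.single _ none (x + f γ c) + pushoutRel u f a‖ +
          (P (some γ)).pnorm.N (-u γ c) ^ p := by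
          rw [(P (some γ)).pnorm.map_neg, hu]
          exact add_le_add (ih _) hfc
      _ = _ := by rw [hsplit, LpSum.norm_add_single hsome]

lemma norm_pushoutInj_none (x : (P none).carrier) :
    ‖pushoutInj u f none x‖ = (P none).pnorm.N x ^ p := by
  refine le_antisymm (norm_pushoutInj_le u f none x) (le_norm_mk_topologicalClosure ?_)
  rintro _ ⟨a, rfl⟩
  exact le_norm_single_none_add_pushoutRel hu hf x a

lemma le_norm_pushoutInj_some {c : ℝ} (hc0 : 0 ≤ c) (hc1 : c ≤ 1) {γ : Γ}
    (hfγ : ∀ a, c * (A γ).pnorm.N a ^ p ≤ (P none).pnorm.N (f γ a) ^ p) (b : (P (some γ)).carrier) :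
    c * (P (some γ)).pnorm.N b ^ p ≤ ‖pushoutInj u f (some γ) b‖ := by
  refine le_norm_mk_topologicalClosure ?_
  rintro _ ⟨a, rfl⟩
  have hsome : (LpSum.single _ none (f γ (a γ)) + pushoutRel u f (a.erase γ) : PushoutSum P)
      (some γ) = 0 := by
    rw [LpSum.add_apply, LpSum.single_apply_ne (Option.some_ne_none γ), pushoutRel_apply_some,
      DFinsupp.erase_same, map_zero, map_zero, neg_zero, zero_add]
  have hsplit : LpSum.single _ (some γ) b + pushoutRel u f a =
      (LpSum.single _ none (f γ (a γ)) + pushoutRel u f (a.erase γ)) +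
        LpSum.single _ (some γ) (b - u γ (a γ)) := by
    conv_lhs => rw [← DFinsupp.single_add_erase γ a]
    rw [map_add, pushoutRel_single, map_sub]
    abel
  have hb := (P (some γ)).pnorm.pow_le_add_pow_sub b (u γ (a γ))
  rw [hu] at hb
  have hrest := le_norm_single_none_add_pushoutRel hu hf (f γ (a γ)) (a.erase γ)
  have hm : 0 ≤ (P (some γ)).pnorm.N (b - u γ (a γ)) ^ p := Real.rpow_nonneg (PNorm.nonneg _ _) _
  rw [hsplit, LpSum.norm_add_single hsome]
  linarith [hfγ (a γ), mul_le_mul_of_nonneg_left hb hc0, mul_le_of_le_one_left hm hc1]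

lemma pushoutPBanach_pnorm_inj_none (x : (P none).carrier) :
    (pushoutPBanach u f).pnorm.N (pushoutInj u f none x) = (P none).pnorm.N x := by
  rw [pushoutPBanach_pnorm, norm_pushoutInj_none hu hf,
    Real.rpow_rpow_inv (PNorm.nonneg _ _) (Fact.out : 0 < p).ne']

lemma le_pushoutPBanach_pnorm_inj_some {c : ℝ} (hc0 : 0 ≤ c) (hc1 : c ≤ 1) {γ : Γ}
    (hfγ : ∀ a, c * (A γ).pnorm.N a ≤ (P none).pnorm.N (f γ a)) (b : (P (some γ)).carrier) :
    c * (P (some γ)).pnorm.N b ≤ (pushoutPBanach u f).pnorm.N (pushoutInj u f (some γ) b) := by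
  have hp : 0 < p := Fact.out
  rw [pushoutPBanach_pnorm, Real.le_rpow_inv_iff_of_pos (mul_nonneg hc0 (PNorm.nonneg _ _))
    (norm_nonneg _) hp, Real.mul_rpow hc0 (PNorm.nonneg _ _)]
  refine le_norm_pushoutInj_some hu hf (Real.rpow_nonneg hc0 p)
    (Real.rpow_le_one hc0 hc1 hp.le) (fun a => ?_) b
  rw [← Real.mul_rpow hc0 (PNorm.nonneg _ _)]
  exact Real.rpow_le_rpow (mul_nonneg hc0 (PNorm.nonneg _ _)) (hfγ a) hp.le

end Pushout

end

theorem statement5_general (p : ℝ) (hp0 : 0 < p) (E : PBanach p) (Γ : Type) (A B : Γ → PBanach p)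
    (u : ∀ γ : Γ, (A γ).carrier →ₗ[ℝ] (B γ).carrier)
    (hu : ∀ (γ : Γ) (a : (A γ).carrier), (B γ).pnorm.N (u γ a) = (A γ).pnorm.N a)
    (f : ∀ γ : Γ, (A γ).carrier →ₗ[ℝ] E.carrier)
    (hf : ∀ (γ : Γ) (a : (A γ).carrier), E.pnorm.N (f γ a) ≤ (A γ).pnorm.N a) :
    ∃ (E' : PBanach p) (ι : E.carrier →ₗ[ℝ] E'.carrier),
      (∀ x, E'.pnorm.N (ι x) = E.pnorm.N x) ∧
      ∀ γ : Γ, ∃ f' : (B γ).carrier →ₗ[ℝ] E'.carrier,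
        (∀ b, E'.pnorm.N (f' b) ≤ (B γ).pnorm.N b) ∧
        (∀ a, f' (u γ a) = ι (f γ a)) ∧
        (∀ ε : ℝ, 0 ≤ ε → ε < 1 →
          (∀ a, (1 - ε) * (A γ).pnorm.N a ≤ E.pnorm.N (f γ a) ∧
            E.pnorm.N (f γ a) ≤ (1 + ε) * (A γ).pnorm.N a) →
          ∀ b, (1 - ε) * (B γ).pnorm.N b ≤ E'.pnorm.N (f' b) ∧
            E'.pnorm.N (f' b) ≤ (1 + ε) * (B γ).pnorm.N b) := by
  have : Fact (0 < p) := ⟨hp0⟩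
  classical
  let P : Option Γ → PBanach p := fun o => o.elim E B
  refine ⟨pushoutPBanach (P := P) u f, pushoutInj (P := P) u f none,
    pushoutPBanach_pnorm_inj_none (P := P) hu hf, fun γ => ⟨pushoutInj (P := P) u f (some γ),
      pushoutPBanach_pnorm_inj_le (P := P) u f (some γ), pushoutInj_some_comp (P := P) u f γ,
      fun ε hε0 hε1 hε b => ⟨?_, ?_⟩⟩⟩
  · exact le_pushoutPBanach_pnorm_inj_some (P := P) hu hf (by linarith) (by linarith)
      (fun a => (hε a).1) b
  · exact (pushoutPBanach_pnorm_inj_le (P := P) u f (some γ) b).trans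
      (le_mul_of_one_le_left ((B γ).pnorm.nonneg b) (by linarith))

/-- the simultaneous extension lemma: given a family of isometries `u γ : A γ → B γ`
and nonexpansive operators `f γ : A γ → E`, there are a `p`-Banach space `E'` and an isometry
`ι : E → E'` such that each `f γ` extends through `u γ` to a nonexpansive `f' γ : B γ → E'`;
moreover `f' γ` is an `ε`-isometry whenever `f γ` is. -/
theorem statement5 (p : ℝ) (hp0 : 0 < p) (hp1 : p ≤ 1)
    (E : PBanach p) (Γ : Type) (A B : Γ → PBanach p)
    (u : ∀ γ : Γ, (A γ).carrier →ₗ[ℝ] (B γ).carrier)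
    (hu : ∀ (γ : Γ) (a : (A γ).carrier), (B γ).pnorm.N (u γ a) = (A γ).pnorm.N a)
    (f : ∀ γ : Γ, (A γ).carrier →ₗ[ℝ] E.carrier)
    (hf : ∀ (γ : Γ) (a : (A γ).carrier), E.pnorm.N (f γ a) ≤ (A γ).pnorm.N a) :
    ∃ (E' : PBanach p) (ι : E.carrier →ₗ[ℝ] E'.carrier),
      (∀ x, E'.pnorm.N (ι x) = E.pnorm.N x) ∧
      ∀ γ : Γ, ∃ f' : (B γ).carrier →ₗ[ℝ] E'.carrier,
        (∀ b, E'.pnorm.N (f' b) ≤ (B γ).pnorm.N b) ∧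
        (∀ a, f' (u γ a) = ι (f γ a)) ∧
        (∀ ε : ℝ, 0 ≤ ε → ε < 1 →
          (∀ a, (1 - ε) * (A γ).pnorm.N a ≤ E.pnorm.N (f γ a) ∧
            E.pnorm.N (f γ a) ≤ (1 + ε) * (A γ).pnorm.N a) →
          ∀ b, (1 - ε) * (B γ).pnorm.N b ≤ E'.pnorm.N (f' b) ∧
            E'.pnorm.N (f' b) ≤ (1 + ε) * (B γ).pnorm.N b) :=
  statement5_general p hp0 E Γ A B u hu f hf

end PGurarii
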